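/- In the irrational rotation algebra, the element a_{pq} has a d-th root if and only if d divides both p and q; explicitly, if p = dp', q = dq' then (e^{-iλ p'q'(d-1)/2} a_{p',q'})^d = a_{pq}. Consequently a_{pq} has no nontrivial roots if and only if gcd(p,q) = 1. -/

import Mathlib

/-!
Order `ℤ × ℤ` lexicographically. Since `a_u a_v` is a nonzero multiple of `a_{u+v}`, the leading
index of a product is the sum of the leading indices, so the leading index of `x ^ d` is `d` times
that of `x`; hence `x ^ d = a_{pq}` forces `(p, q) ∈ d • ℤ²`. Conversely the explicit root is
checked with `a_{nl} ^ (k + 1) = e^{iλnl k(k+1)/2} a_{(k+1)n, (k+1)l}`.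
-/

open Complex Set Submodule
open scoped Pointwise

namespace Module.Basis

variable {k A M : Type*} [CommRing k] [Ring A] [Algebra k A]

theorem mul_mem_span [Add M] {b : Basis M k A} {c : M → M → k}
    (hb : ∀ u v, b u * b v = c u v • b (u + v)) {s t r : Set M} (hst : s + t ⊆ r) {x y : A}
    (hx : x ∈ span k (b '' s)) (hy : y ∈ span k (b '' t)) : x * y ∈ span k (b '' r) := by
  have hxy := Submodule.mul_mem_mul hx hy
  rw [span_mul_span] at hxy
  refine span_le.mpr ?_ hxy
  rintro _ ⟨_, ⟨u, hu, rfl⟩, _, ⟨v, hv, rfl⟩, rfl⟩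
  change b u * b v ∈ _
  rw [hb]
  exact smul_mem _ _ (subset_span ⟨u + v, hst (add_mem_add hu hv), rfl⟩)

variable [LinearOrder M] (b : Basis M k A)

def IsLeadingIndex (x : A) (m : M) : Prop :=
  x ∈ span k (b '' Iic m) ∧ b.repr x m ≠ 0

theorem exists_isLeadingIndex {x : A} (hx : x ≠ 0) : ∃ m, b.IsLeadingIndex x m := by
  have hne : (b.repr x).support.Nonempty := by simpa using hx
  exact ⟨_, b.mem_span_image.mpr fun u hu => mem_Iic.mpr ((b.repr x).support.le_max' u hu),
    Finsupp.mem_support_iff.mp ((b.repr x).support.max'_mem hne)⟩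

variable {b}

theorem repr_eq_zero_of_mem_span_Iio {x : A} {m : M} (hx : x ∈ span k (b '' Iio m)) :
    b.repr x m = 0 :=
  Finsupp.notMem_support_iff.mp fun hm => lt_irrefl m (b.mem_span_image.mp hx hm)

theorem sub_smul_mem_span_Iio {x : A} {m : M} (hx : x ∈ span k (b '' Iic m)) :
    x - b.repr x m • b m ∈ span k (b '' Iio m) := by
  classical
  refine b.mem_span_image.mpr fun u hu => ?_
  have hum : u ≠ m := by
    rintro rfl
    simp at hu
  rw [map_sub, map_smul, repr_self, Finsupp.smul_single_one] at hu
  rcases Finset.mem_union.mp (Finsupp.support_sub hu) with hu | hu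
  · exact lt_of_le_of_ne (b.mem_span_image.mp hx hu) hum
  · exact absurd (Finset.mem_singleton.mp (Finsupp.support_single_subset hu)) hum

theorem isLeadingIndex_self [Nontrivial k] (m : M) : b.IsLeadingIndex (b m) m :=
  ⟨subset_span ⟨m, self_mem_Iic, rfl⟩, by simp⟩

theorem IsLeadingIndex.unique {x : A} {m m' : M} (h : b.IsLeadingIndex x m)
    (h' : b.IsLeadingIndex x m') : m = m' :=
  le_antisymm (b.mem_span_image.mp h'.1 (Finsupp.mem_support_iff.mpr h.2))
    (b.mem_span_image.mp h.1 (Finsupp.mem_support_iff.mpr h'.2))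

variable [AddCommMonoid M] [IsOrderedCancelAddMonoid M] {c : M → M → k}
  (hb : ∀ u v, b u * b v = c u v • b (u + v))
include hb

theorem repr_mul_add {x y : A} {m m' : M} (hx : x ∈ span k (b '' Iic m))
    (hy : y ∈ span k (b '' Iic m')) :
    b.repr (x * y) (m + m') = b.repr x m * b.repr y m' * c m m' := by
  -- Only the product of the two leading terms reaches the index `m + m'`.
  set x' := x - b.repr x m • b m
  set y' := y - b.repr y m' • b m'
  have hlow : b.repr x m • b m * y' + x' * y ∈ span k (b '' Iio (m + m')) :=
    add_mem
      (mul_mem_span hb (Iic_add_Iio_subset m m')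
        (smul_mem _ _ (subset_span ⟨m, self_mem_Iic, rfl⟩)) (sub_smul_mem_span_Iio hy))
      (mul_mem_span hb (Iio_add_Iic_subset m m') (sub_smul_mem_span_Iio hx) hy)
  have hsplit : x * y = (b.repr x m * b.repr y m') • (b m * b m') +
      (b.repr x m • b m * y' + x' * y) := by
    simp only [x', y', mul_sub, sub_mul, smul_mul_smul_comm]
    abel
  rw [hsplit, LinearEquiv.map_add, Finsupp.add_apply, repr_eq_zero_of_mem_span_Iio hlow, hb,
    smul_smul, map_smul, repr_self]
  simp

variable [NoZeroDivisors k] (hc : ∀ u v, c u v ≠ 0)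
include hc

theorem IsLeadingIndex.mul {x y : A} {m m' : M} (hx : b.IsLeadingIndex x m)
    (hy : b.IsLeadingIndex y m') : b.IsLeadingIndex (x * y) (m + m') :=
  ⟨mul_mem_span hb (Iic_add_Iic_subset m m') hx.1 hy.1, by
    rw [repr_mul_add hb hx.1 hy.1]
    exact mul_ne_zero (mul_ne_zero hx.2 hy.2) (hc m m')⟩

theorem IsLeadingIndex.pow {x : A} {m : M} (hx : b.IsLeadingIndex x m) (n : ℕ) :
    b.IsLeadingIndex (x ^ (n + 1)) ((n + 1) • m) := by
  induction n with
  | zero => simpa using hx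
  | succ n ih => simpa only [pow_succ, succ_nsmul _ (n + 1)] using ih.mul hb hc hx

theorem exists_nsmul_eq_of_pow_eq [Nontrivial k] {x : A} {n : ℕ} {m : M} (hn : n ≠ 0)
    (hxn : x ^ n = b m) : ∃ m', n • m' = m := by
  obtain ⟨n, rfl⟩ := Nat.exists_eq_succ_of_ne_zero hn
  have hx : x ≠ 0 := by
    rintro rfl
    exact b.ne_zero m (by simpa using hxn.symm)
  obtain ⟨m', hm'⟩ := exists_isLeadingIndex b hx
  refine ⟨m', (hm'.pow hb hc n).unique ?_⟩
  rw [hxn]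
  exact isLeadingIndex_self m

end Module.Basis

section RotationAlgebra

variable {lam : ℝ} {A : Type*} [Ring A] [Algebra ℂ A] {a : ℤ → ℤ → A}
  (hmul : ∀ n₁ l₁ n₂ l₂ : ℤ,
    a n₁ l₁ * a n₂ l₂ = exp (I * (lam * n₁ * l₂)) • a (n₁ + n₂) (l₁ + l₂))
include hmul

theorem rotationAlgebra_pow_succ (n l : ℤ) (k : ℕ) :
    a n l ^ (k + 1) =
      exp (I * (lam * n * l) * (k * (k + 1) / 2)) • a ((k + 1 : ℕ) * n) ((k + 1 : ℕ) * l) := by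
  induction k with
  | zero => simp
  | succ k ih =>
    rw [pow_succ', ih, mul_smul_comm, hmul, smul_smul, ← exp_add]
    congr 2 <;> push_cast <;> ring

theorem rotationAlgebra_root_pow {d : ℕ} (hd : d ≠ 0) (p' q' : ℤ) :
    (exp (-(I * (lam * p' * q' * ((d : ℝ) - 1) / 2))) • a p' q') ^ d = a (d * p') (d * q') := by
  obtain ⟨k, rfl⟩ := Nat.exists_eq_succ_of_ne_zero hd
  rw [smul_pow, rotationAlgebra_pow_succ hmul, smul_smul, ← exp_nat_mul, ← exp_add]
  convert one_smul ℂ _ using 2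
  refine exp_eq_one_iff.mpr ⟨0, ?_⟩
  push_cast
  ring

theorem rotationAlgebra_dvd_of_pow_eq (b : Module.Basis (ℤ × ℤ) ℂ A)
    (hb : ∀ n l : ℤ, b (n, l) = a n l) {x : A} {d : ℕ} (hd : d ≠ 0) {p q : ℤ}
    (hx : x ^ d = a p q) : (d : ℤ) ∣ p ∧ (d : ℤ) ∣ q := by
  have hprod : ∀ u v, b u * b v = exp (I * (lam * u.1 * v.2)) • b (u + v) := by
    rintro ⟨n₁, l₁⟩ ⟨n₂, l₂⟩
    simp only [hb, Prod.mk_add_mk, hmul]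
  obtain ⟨m, hm⟩ := (b.reindex toLex).exists_nsmul_eq_of_pow_eq
    (fun u v => by simpa using hprod (ofLex u) (ofLex v)) (fun _ _ => exp_ne_zero _) hd
    (m := toLex (p, q)) (by simpa [hb] using hx)
  have := congrArg ofLex hm
  simp only [ofLex_toLex, Prod.ext_iff, nsmul_eq_mul] at this
  exact ⟨⟨_, this.1.symm⟩, ⟨_, this.2.symm⟩⟩

end RotationAlgebra

theorem Int.gcd_eq_one_iff_forall_two_le_not_dvd (p q : ℤ) :
    Int.gcd p q = 1 ↔ ∀ d : ℕ, 2 ≤ d → ¬((d : ℤ) ∣ p ∧ (d : ℤ) ∣ q) := by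
  rw [Int.gcd_eq_natAbs]
  constructor
  · rintro h d hd ⟨hp, hq⟩
    have hd1 := Nat.le_of_dvd one_pos
      (h ▸ Nat.dvd_gcd (Int.natCast_dvd.mp hp) (Int.natCast_dvd.mp hq))
    omega
  · exact fun h => Nat.coprime_of_dvd fun d hd hp hq =>
      h d hd.two_le ⟨Int.natCast_dvd.mpr hp, Int.natCast_dvd.mpr hq⟩

theorem rotationAlgebra_roots
    (lam : ℝ)
    (A : Type) [Ring A] [Algebra ℂ A]
    (a : ℤ → ℤ → A)
    (b : Module.Basis (ℤ × ℤ) ℂ A) (hb : ∀ n l : ℤ, b (n, l) = a n l)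
    (hmul : ∀ n₁ l₁ n₂ l₂ : ℤ,
      a n₁ l₁ * a n₂ l₂ =
        Complex.exp (Complex.I * (lam * n₁ * l₂)) • a (n₁ + n₂) (l₁ + l₂)) :
    ∀ p q : ℤ,
      (∀ d : ℕ, 2 ≤ d →
        ((∃ x : A, x ^ d = a p q) ↔ ((d : ℤ) ∣ p ∧ (d : ℤ) ∣ q))) ∧
      (∀ d : ℕ, 2 ≤ d → ∀ p' q' : ℤ, p = d * p' → q = d * q' →
        (Complex.exp (-(Complex.I * (lam * p' * q' * ((d : ℝ) - 1) / 2))) • a p' q') ^ d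
          = a p q) ∧
      ((∀ d : ℕ, 2 ≤ d → ¬ ∃ x : A, x ^ d = a p q) ↔ Int.gcd p q = 1) := by
  intro p q
  have hroot : ∀ d : ℕ, 2 ≤ d → ((∃ x : A, x ^ d = a p q) ↔ ((d : ℤ) ∣ p ∧ (d : ℤ) ∣ q)) := by
    intro d hd
    refine ⟨fun ⟨x, hx⟩ => rotationAlgebra_dvd_of_pow_eq hmul b hb (by omega) hx, ?_⟩
    rintro ⟨⟨p', rfl⟩, ⟨q', rfl⟩⟩
    exact ⟨_, rotationAlgebra_root_pow hmul (by omega) p' q'⟩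
  refine ⟨hroot, ?_, ?_⟩
  · rintro d hd p' q' rfl rfl
    exact rotationAlgebra_root_pow hmul (by omega) p' q'
  · rw [Int.gcd_eq_one_iff_forall_two_le_not_dvd]
    exact forall₂_congr fun d hd => not_congr (hroot d hd)
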